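/- arXiv:1501.07267 — 3 statements merged into one kernel-verified Lean document; each statement's English description precedes it below -/
import Mathlib

section
/- There exist a real constant C₁, a constant K > 0, and a natural number N such that for all natural numbers n ≥ N, |∑_{i=2}^{n} 1/ln(i) − ∫_2^n dt/ln(t) − C₁| ≤ K / ln(n). In particular, the sequence ∑_{i=2}^{n} 1/ln(i) − ∫_2^n dt/ln(t) converges as n → ∞. -/
/-!
For `f` antitone and nonnegative on `[a, ∞)`, put `D n = ∑_{i=a}^n f i - ∫_a^n f`. Since
`f (n + 1) ≤ ∫_n^{n+1} f ≤ f n`, the sequence `D n` decreases while `D n - f n` increases, so both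
squeeze a common limit `C` with `D n - f n ≤ C ≤ D n`. For `f = 1 / log` this gives the theorem
with `K = 1`.
-/

open MeasureTheory Filter

open Set Topology

theorem exists_tendsto_abs_sub_le_of_antitone_of_monotone_sub {u w : ℕ → ℝ} (hu : Antitone u)
    (huw : Monotone fun n => u n - w n) (hw : ∀ n, 0 ≤ w n) :
    ∃ C, Tendsto u atTop (𝓝 C) ∧ ∀ n, |u n - C| ≤ w n := by
  have hbdd : BddBelow (range u) :=
    ⟨u 0 - w 0, by rintro _ ⟨n, rfl⟩; linarith [huw (Nat.zero_le n), hw n]⟩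
  refine ⟨iInf u, tendsto_atTop_ciInf hu hbdd, fun n => abs_sub_le_iff.2 ⟨?_, ?_⟩⟩
  · have : u n - w n ≤ iInf u := le_ciInf fun m => by
      rcases le_total m n with hmn | hnm
      · linarith [hu hmn, hw n]
      · linarith [huw hnm, hw m]
    linarith
  · linarith [ciInf_le hbdd n, hw n]

section AntitoneOn

variable {f : ℝ → ℝ}

theorem AntitoneOn.apply_add_one_le_intervalIntegral {x : ℝ}
    (hf : AntitoneOn f (Icc x (x + 1))) :
    f (x + 1) ≤ ∫ t in x..x + 1, f t := by
  simpa using AntitoneOn.sum_le_integral (x₀ := x) (a := 1) (by simpa using hf)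

theorem AntitoneOn.intervalIntegral_le_apply {x : ℝ} (hf : AntitoneOn f (Icc x (x + 1))) :
    ∫ t in x..x + 1, f t ≤ f x := by
  simpa using AntitoneOn.integral_le_sum (x₀ := x) (a := 1) (by simpa using hf)

theorem AntitoneOn.sum_Icc_sub_integral_succ {a n : ℕ} (hf : AntitoneOn f (Ici a)) (hn : a ≤ n) :
    ∑ i ∈ Finset.Icc a (n + 1), f i - ∫ t in (a : ℝ)..(n + 1 : ℕ), f t =
      (∑ i ∈ Finset.Icc a n, f i - ∫ t in (a : ℝ)..n, f t) +
        (f (n + 1) - ∫ t in (n : ℝ)..n + 1, f t) := by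
  have hn' : (a : ℝ) ≤ n := by exact_mod_cast hn
  have hint : ∀ {x y : ℝ}, (a : ℝ) ≤ x → (a : ℝ) ≤ y → IntervalIntegrable f volume x y :=
    fun hx hy => (hf.mono fun t ht => le_trans (le_min hx hy) ht.1).intervalIntegrable
  rw [Finset.sum_Icc_succ_top (by omega), Nat.cast_succ,
    ← intervalIntegral.integral_add_adjacent_intervals (hint le_rfl hn') (hint hn' (by linarith))]
  ring

theorem AntitoneOn.exists_tendsto_sum_Icc_sub_integral {a : ℕ} (hf : AntitoneOn f (Ici a))
    (hf₀ : ∀ x ∈ Ici (a : ℝ), 0 ≤ f x) :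
    ∃ C, (∀ n ≥ a, |∑ i ∈ Finset.Icc a n, f i - (∫ t in (a : ℝ)..n, f t) - C| ≤ f n) ∧
      Tendsto (fun n : ℕ => ∑ i ∈ Finset.Icc a n, f i - ∫ t in (a : ℝ)..n, f t) atTop (𝓝 C) := by
  set D : ℕ → ℝ := fun n => ∑ i ∈ Finset.Icc a n, f i - ∫ t in (a : ℝ)..n, f t
  have hunit : ∀ k : ℕ, AntitoneOn f (Icc ((k + a : ℕ) : ℝ) ((k + a : ℕ) + 1)) := fun k =>
    hf.mono fun t ht => le_trans (by push_cast; linarith [k.cast_nonneg (α := ℝ)]) ht.1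
  have hstep : ∀ k, D (k + 1 + a) =
      D (k + a) + (f ((k + a : ℕ) + 1) - ∫ t in ((k + a : ℕ) : ℝ)..(k + a : ℕ) + 1, f t) :=
    fun k => by rw [add_right_comm]; exact hf.sum_Icc_sub_integral_succ (by omega)
  obtain ⟨C, hlim, hle⟩ := exists_tendsto_abs_sub_le_of_antitone_of_monotone_sub
    (u := fun k => D (k + a)) (w := fun k => f (k + a : ℕ))
    (antitone_nat_of_succ_le fun k => by
      simp only [hstep]; linarith [(hunit k).apply_add_one_le_intervalIntegral])
    (monotone_nat_of_le_succ fun k => by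
      have hcast : ((k + 1 + a : ℕ) : ℝ) = (k + a : ℕ) + 1 := by push_cast; ring
      simp only [hstep, hcast]; linarith [(hunit k).intervalIntegral_le_apply])
    (fun k => hf₀ _ (by simp))
  refine ⟨C, fun n hn => ?_, (tendsto_add_atTop_iff_nat a).1 hlim⟩
  simpa [Nat.sub_add_cancel hn] using hle (n - a)

end AntitoneOn

theorem Real.antitoneOn_one_div_log : AntitoneOn (fun t => 1 / Real.log t) (Ioi 1) :=
  fun _ hx _ hy hxy =>
    one_div_le_one_div_of_le (Real.log_pos hx) (Real.log_le_log (by linarith [mem_Ioi.1 hx]) hxy)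

theorem sum_minus_integral_one_div_log :
    ∃ C₁ : ℝ, ∃ K > (0:ℝ), ∃ N : ℕ,
      (∀ n : ℕ, n ≥ N →
        |(∑ i ∈ Finset.Icc 2 n, 1 / Real.log i) -
          (∫ t in (2:ℝ)..(n:ℝ), 1 / Real.log t) - C₁| ≤ K / Real.log n) ∧
      Tendsto (fun n : ℕ => (∑ i ∈ Finset.Icc 2 n, 1 / Real.log i) -
        ∫ t in (2:ℝ)..(n:ℝ), 1 / Real.log t) atTop (nhds C₁) := by
  have hf : AntitoneOn (fun t => 1 / Real.log t) (Ici ((2 : ℕ) : ℝ)) :=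
    Real.antitoneOn_one_div_log.mono fun t ht => by norm_num at ht ⊢; linarith
  have hf₀ : ∀ t ∈ Ici ((2 : ℕ) : ℝ), 0 ≤ 1 / Real.log t := fun t ht =>
    one_div_nonneg.2 (Real.log_nonneg (by norm_num at ht; linarith))
  obtain ⟨C, hbound, hlim⟩ := hf.exists_tendsto_sum_Icc_sub_integral hf₀
  exact ⟨C, 1, one_pos, 2, by simpa using hbound, by simpa using hlim⟩
end

section
/- There exists x₀ > 2 such that for all real x ≥ x₀: ∫_2^x dt/ln(t) − ∫_2^x dt/ln²(t) ≤ Li(x) − Li(x)²/x ≤ Li(x). (That is, the variance of the paper's second probabilistic model is at most the variance of the first probabilistic model, which is at most Li(x).) -/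
/-!
By Cauchy–Schwarz, `Li(x)² ≤ (x - 2) ∫_2^x dt/ln²t ≤ x ∫_2^x dt/ln²t`, which is the left
inequality; the right one only says `Li(x)²/x ≥ 0`.
-/

open MeasureTheory

theorem sq_intervalIntegral_le_mul_intervalIntegral_sq_of_le {f : ℝ → ℝ} {a b : ℝ} (hab : a ≤ b)
    (hf : IntervalIntegrable f volume a b) (hf2 : IntervalIntegrable (fun t => f t ^ 2) volume a b) :
    (∫ t in a..b, f t) ^ 2 ≤ (b - a) * ∫ t in a..b, f t ^ 2 := by
  -- `c ↦ ∫ (f - c)²` is a nonnegative quadratic, so its discriminant is `≤ 0`.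
  have hquadratic : ∀ c : ℝ,
      0 ≤ (b - a) * (c * c) + (-2 * ∫ t in a..b, f t) * c + ∫ t in a..b, f t ^ 2 := by
    intro c
    have hexpand : ∫ t in a..b, (f t - c) ^ 2 =
        (∫ t in a..b, f t ^ 2) - 2 * c * (∫ t in a..b, f t) + (b - a) * c ^ 2 := by
      rw [intervalIntegral.integral_congr (g := fun t => f t ^ 2 - 2 * c * f t + c ^ 2)
          fun t _ => by ring,
        intervalIntegral.integral_add (hf2.sub (hf.const_mul (2 * c))) intervalIntegrable_const,
        intervalIntegral.integral_sub hf2 (hf.const_mul (2 * c)),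
        intervalIntegral.integral_const_mul, intervalIntegral.integral_const, smul_eq_mul]
    have hnonneg : 0 ≤ ∫ t in a..b, (f t - c) ^ 2 :=
      intervalIntegral.integral_nonneg hab fun t _ => sq_nonneg (f t - c)
    linarith
  have hdiscrim := discrim_le_zero hquadratic
  rw [discrim] at hdiscrim
  linarith

theorem sq_intervalIntegral_le_mul_intervalIntegral_sq {f : ℝ → ℝ} {a b : ℝ}
    (hf : IntervalIntegrable f volume a b) (hf2 : IntervalIntegrable (fun t => f t ^ 2) volume a b) :
    (∫ t in a..b, f t) ^ 2 ≤ (b - a) * ∫ t in a..b, f t ^ 2 := by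
  rcases le_total a b with hab | hba
  · exact sq_intervalIntegral_le_mul_intervalIntegral_sq_of_le hab hf hf2
  · have hswap := sq_intervalIntegral_le_mul_intervalIntegral_sq_of_le hba hf.symm hf2.symm
    rw [intervalIntegral.integral_symm a b, intervalIntegral.integral_symm a b, neg_sq] at hswap
    linarith

theorem continuousOn_one_div_log {a b : ℝ} (ha : 1 < a) (hb : 1 < b) :
    ContinuousOn (fun t => 1 / Real.log t) (Set.uIcc a b) := by
  have hgt : ∀ t ∈ Set.uIcc a b, 1 < t := fun t ht => lt_of_lt_of_le (lt_min ha hb) ht.1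
  refine continuousOn_const.div (Real.continuousOn_log.mono fun t ht => ?_) fun t ht => ?_
  · exact (zero_lt_one.trans (hgt t ht)).ne'
  · exact (Real.log_pos (hgt t ht)).ne'

theorem variance_comparison :
    ∃ x₀ > (2:ℝ), ∀ x ≥ x₀,
      (∫ t in (2:ℝ)..x, 1 / Real.log t) - (∫ t in (2:ℝ)..x, 1 / (Real.log t) ^ 2) ≤
        (∫ t in (2:ℝ)..x, 1 / Real.log t) - (∫ t in (2:ℝ)..x, 1 / Real.log t) ^ 2 / x ∧
      (∫ t in (2:ℝ)..x, 1 / Real.log t) - (∫ t in (2:ℝ)..x, 1 / Real.log t) ^ 2 / x ≤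
        ∫ t in (2:ℝ)..x, 1 / Real.log t := by
  refine ⟨3, by norm_num, fun x hx => ?_⟩
  have hx2 : (2:ℝ) ≤ x := by linarith [show (3:ℝ) ≤ x from hx]
  have hcont := continuousOn_one_div_log (by norm_num : (1:ℝ) < 2) (by linarith)
  have hcs := sq_intervalIntegral_le_mul_intervalIntegral_sq hcont.intervalIntegrable
    (hcont.pow 2).intervalIntegrable
  simp only [one_div_pow] at hcs
  have hJ : 0 ≤ ∫ t in (2:ℝ)..x, 1 / Real.log t ^ 2 :=
    intervalIntegral.integral_nonneg hx2 fun t _ => by positivity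
  have hL2 : (∫ t in (2:ℝ)..x, 1 / Real.log t) ^ 2 / x ≤ ∫ t in (2:ℝ)..x, 1 / Real.log t ^ 2 := by
    rw [div_le_iff₀ (by linarith)]
    nlinarith
  exact ⟨by linarith, by linarith [show 0 ≤ (∫ t in (2:ℝ)..x, 1 / Real.log t) ^ 2 / x by positivity]⟩
end

section
/- There exists a constant C > 0 such that for every natural number N ≥ 3, ∑_{k=1}^{N} 1/√(φ(k)) ≤ C · √(N · ln(ln N)). -/
/-!
Since `k / φ k ≥ 1`, we have `1 / √(φ k) ≤ (k / φ k) / √k`, and `k / φ k` is bounded on average: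
`k / φ k ≤ ∑_{d ∣ k} 1 / φ d` (from `k = ∑_{d ∣ k} φ (k / d)` and `φ d φ (k / d) ≤ φ k`), so
`∑_{k ≤ N} k / φ k ≤ N ∑_d 1 / (d φ d)`, a convergent series because `d ≤ 2 φ(d)²`.
Hence each dyadic block `(N / 2, N]` contributes `O(√N)`, and summing over the blocks gives
`∑_{k ≤ N} 1 / √(φ k) = O(√N)`, which is stronger than the claim as `log (log N) ≥ log (log 3) > 0`.
-/

open Finset Real

theorem sum_Ioc_le_mul_sqrt_of_dyadic {f : ℕ → ℝ} {A : ℝ} (hA : 0 ≤ A)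
    (hf : ∀ N : ℕ, ∑ k ∈ Ioc (N / 2) N, f k ≤ A * √N) (N : ℕ) :
    ∑ k ∈ Ioc 0 N, f k ≤ 4 * A * √N := by
  induction N using Nat.strong_induction_on with
  | _ N ih =>
  rcases Nat.eq_zero_or_pos N with rfl | hN
  · simp
  have h_half : √2 * √(N / 2 : ℕ) ≤ √N := by
    rw [← sqrt_mul zero_le_two]
    exact Real.sqrt_le_sqrt (by exact_mod_cast Nat.mul_div_le N 2)
  have h_sqrt_two : √2 ≤ 3 / 2 := (sqrt_le_left (by norm_num)).mpr (by norm_num)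
  have h_head : 4 * √(N / 2 : ℕ) ≤ 3 * √N :=
    calc 4 * √(N / 2 : ℕ) = 2 * √2 * (√2 * √(N / 2 : ℕ)) := by
          rw [← mul_assoc, mul_assoc 2, mul_self_sqrt zero_le_two]; ring
      _ ≤ 2 * √2 * √N := by gcongr
      _ ≤ 3 * √N := by gcongr; linarith
  rw [← sum_Ioc_consecutive f (Nat.zero_le (N / 2)) (Nat.div_le_self N 2)]
  calc _ ≤ 4 * A * √(N / 2 : ℕ) + A * √N :=
        add_le_add (ih _ (Nat.div_lt_self hN one_lt_two)) (hf N)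
    _ ≤ 4 * A * √N := by nlinarith

namespace Nat

theorem le_totient_sq_of_odd {n : ℕ} (hn : Odd n) : n ≤ φ n ^ 2 := by
  induction n using recOnPosPrimePosCoprime with
  | zero => simp at hn
  | one => simp
  | prime_pow p k hp hk =>
    have hp3 : 3 ≤ p := by
      have hp_odd := odd_iff.mp ((odd_pow_iff hk.ne').mp hn)
      have hp_two := hp.two_le
      omega
    have hp_le : p ≤ (p - 1) ^ 2 := by
      obtain ⟨s, rfl⟩ : ∃ s, p = s + 3 := ⟨p - 3, by omega⟩
      rw [show s + 3 - 1 = s + 2 by omega]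
      nlinarith
    rw [totient_prime_pow hp hk, ← pow_sub_one_mul hk.ne', mul_pow]
    exact Nat.mul_le_mul (le_self_pow two_ne_zero _) hp_le
  | coprime a b _ _ hab iha ihb =>
    obtain ⟨ha, hb⟩ := odd_mul.mp hn
    rw [totient_mul hab, mul_pow]
    exact Nat.mul_le_mul (iha ha) (ihb hb)

theorem le_two_mul_totient_sq (n : ℕ) : n ≤ 2 * φ n ^ 2 := by
  rcases eq_or_ne n 0 with rfl | hn
  · simp
  obtain ⟨k, m, hm, rfl⟩ := exists_eq_two_pow_mul_odd hn
  have h_two_pow : 2 ^ k ≤ 2 * φ (2 ^ k) ^ 2 := by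
    cases k with
    | zero => simp
    | succ k =>
      rw [totient_prime_pow_succ prime_two, pow_succ']
      simpa using Nat.le_self_pow two_ne_zero (2 ^ k)
  rw [totient_mul ((coprime_two_left.mpr hm).pow_left k), mul_pow, ← mul_assoc]
  exact Nat.mul_le_mul h_two_pow (le_totient_sq_of_odd hm)

theorem sqrt_le_sqrt_two_mul_totient (n : ℕ) : √n ≤ √2 * φ n := by
  rw [← sqrt_sq (Nat.cast_nonneg (φ n)), ← sqrt_mul zero_le_two]
  exact Real.sqrt_le_sqrt (by exact_mod_cast le_two_mul_totient_sq n)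

theorem div_totient_le_sum_inv_totient (n : ℕ) :
    (n : ℝ) / φ n ≤ ∑ d ∈ n.divisors, (φ d : ℝ)⁻¹ := by
  rcases eq_or_ne n 0 with rfl | hn
  · simp
  have hφ : (0 : ℝ) < φ n := by exact_mod_cast totient_pos.mpr (pos_of_ne_zero hn)
  rw [div_le_iff₀ hφ, sum_mul]
  calc (n : ℝ) = ∑ d ∈ n.divisors, (φ (n / d) : ℝ) := by
        exact_mod_cast (by rw [sum_div_divisors, sum_totient])
    _ ≤ ∑ d ∈ n.divisors, (φ d : ℝ)⁻¹ * φ n := by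
        refine sum_le_sum fun d hd => ?_
        rw [le_inv_mul_iff₀ (by exact_mod_cast totient_pos.mpr (pos_of_mem_divisors hd))]
        exact_mod_cast Nat.mul_div_cancel' (dvd_of_mem_divisors hd) ▸
          totient_super_multiplicative d (n / d)

theorem sum_Ioc_sum_divisors {M : Type*} [AddCommMonoid M] (f : ℕ → M) (N : ℕ) :
    ∑ k ∈ Ioc 0 N, ∑ d ∈ k.divisors, f d = ∑ d ∈ Ioc 0 N, (N / d) • f d := by
  have h_divisors : ∀ k ∈ Ioc 0 N, k.divisors = {d ∈ Ioc 0 N | d ∣ k} := by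
    intro k hk
    rw [mem_Ioc] at hk
    ext d
    simp only [Nat.mem_divisors, mem_filter, mem_Ioc]
    constructor
    · rintro ⟨hdk, -⟩
      exact ⟨⟨Nat.pos_of_dvd_of_pos hdk hk.1, (Nat.le_of_dvd hk.1 hdk).trans hk.2⟩, hdk⟩
    · rintro ⟨-, hdk⟩
      exact ⟨hdk, by omega⟩
  rw [sum_congr rfl fun k hk => by rw [h_divisors k hk, sum_filter], sum_comm]
  refine sum_congr rfl fun d _ => ?_
  rw [← sum_filter, sum_const, Nat.Ioc_filter_dvd_card_eq_div]

end Nat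

section Totient

open Nat

theorem summable_inv_mul_totient : Summable fun n : ℕ => ((n : ℝ) * φ n)⁻¹ := by
  refine Summable.of_nonneg_of_le (fun n => by positivity) (fun n => ?_)
    ((summable_nat_rpow_inv.mpr (by norm_num : (1 : ℝ) < 3 / 2)).mul_left √2)
  rcases eq_or_ne n 0 with rfl | hn
  · simp
  have hn' : (0 : ℝ) < n := by exact_mod_cast pos_of_ne_zero hn
  have h_rpow : (n : ℝ) ^ (3 / 2 : ℝ) = n * √n := by
    rw [show (3 / 2 : ℝ) = 1 + 1 / 2 by norm_num, rpow_add hn', rpow_one, sqrt_eq_rpow]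
  calc ((n : ℝ) * φ n)⁻¹ = √2 * (n * (√2 * φ n))⁻¹ := by
        field_simp
    _ ≤ √2 * ((n : ℝ) ^ (3 / 2 : ℝ))⁻¹ := by
        rw [h_rpow]
        gcongr
        exact sqrt_le_sqrt_two_mul_totient n

theorem sum_Ioc_div_totient_le (N : ℕ) :
    ∑ k ∈ Ioc 0 N, (k : ℝ) / φ k ≤ (∑' n : ℕ, ((n : ℝ) * φ n)⁻¹) * N := by
  calc ∑ k ∈ Ioc 0 N, (k : ℝ) / φ k
      ≤ ∑ k ∈ Ioc 0 N, ∑ d ∈ k.divisors, (φ d : ℝ)⁻¹ :=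
        sum_le_sum fun k _ => div_totient_le_sum_inv_totient k
    _ = ∑ d ∈ Ioc 0 N, (N / d) • (φ d : ℝ)⁻¹ := sum_Ioc_sum_divisors _ N
    _ ≤ ∑ d ∈ Ioc 0 N, N * ((d : ℝ) * φ d)⁻¹ := by
        refine sum_le_sum fun d _ => ?_
        rw [nsmul_eq_mul, mul_inv, ← mul_assoc, ← div_eq_mul_inv (N : ℝ)]
        gcongr
        exact cast_div_le
    _ = N * ∑ d ∈ Ioc 0 N, ((d : ℝ) * φ d)⁻¹ := (mul_sum ..).symm
    _ ≤ N * ∑' n : ℕ, ((n : ℝ) * φ n)⁻¹ := by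
        gcongr
        exact summable_inv_mul_totient.sum_le_tsum _ fun n _ => by positivity
    _ = _ := mul_comm ..

theorem one_div_sqrt_totient_le (k : ℕ) : 1 / √(φ k) ≤ k / φ k / √k := by
  rcases eq_or_ne k 0 with rfl | hk
  · simp
  have h_one_le : 1 ≤ (k : ℝ) / φ k :=
    (one_le_div (by exact_mod_cast totient_pos.mpr (pos_of_ne_zero hk))).mpr
      (by exact_mod_cast totient_le k)
  calc 1 / √(φ k) = √(k / φ k) / √k := by
        have : √(k : ℝ) ≠ 0 := by positivity
        rw [sqrt_div' _ (Nat.cast_nonneg _)]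
        field_simp
    _ ≤ k / φ k / √k := by
        gcongr
        exact sqrt_le_self_iff.mpr (Or.inr h_one_le)

theorem sum_Ioc_half_one_div_sqrt_totient_le (N : ℕ) :
    ∑ k ∈ Ioc (N / 2) N, 1 / √(φ k) ≤ √2 * (∑' n : ℕ, ((n : ℝ) * φ n)⁻¹) * √N := by
  rcases eq_or_ne N 0 with rfl | hN
  · simp
  have hN' : 0 < √(N : ℝ) := sqrt_pos.mpr (by exact_mod_cast pos_of_ne_zero hN)
  calc ∑ k ∈ Ioc (N / 2) N, 1 / √(φ k)
      ≤ ∑ k ∈ Ioc (N / 2) N, k / φ k * (√2 / √N) := by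
        refine sum_le_sum fun k hk => (one_div_sqrt_totient_le k).trans ?_
        rw [mem_Ioc] at hk
        have h_inv_sqrt : 1 / √k ≤ √2 / √N := by
          rw [div_le_div_iff₀ (sqrt_pos.mpr (by exact_mod_cast (by omega : 0 < k))) hN',
            one_mul, ← sqrt_mul zero_le_two]
          exact Real.sqrt_le_sqrt (by exact_mod_cast (by omega : N ≤ 2 * k))
        rw [div_eq_mul_one_div _ (√k)]
        exact mul_le_mul_of_nonneg_left h_inv_sqrt (by positivity)
    _ ≤ ∑ k ∈ Ioc 0 N, k / φ k * (√2 / √N) :=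
        sum_le_sum_of_subset_of_nonneg (Ioc_subset_Ioc_left (Nat.zero_le _))
          fun _ _ _ => by positivity
    _ = (∑ k ∈ Ioc 0 N, (k : ℝ) / φ k) * (√2 / √N) := (sum_mul ..).symm
    _ ≤ (∑' n : ℕ, ((n : ℝ) * φ n)⁻¹) * N * (√2 / √N) := by
        gcongr
        exact sum_Ioc_div_totient_le N
    _ = √2 * (∑' n : ℕ, ((n : ℝ) * φ n)⁻¹) * √N := by
        field_simp
        rw [sq_sqrt (Nat.cast_nonneg N)]

end Totient

theorem sum_inv_sqrt_totient_le :
    ∃ C > (0:ℝ), ∀ N : ℕ, 3 ≤ N →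
      (∑ k ∈ Finset.Icc 1 N, 1 / Real.sqrt (Nat.totient k)) ≤
        C * Real.sqrt (N * Real.log (Real.log N)) := by
  set S := ∑' n : ℕ, ((n : ℝ) * n.totient)⁻¹
  have hS : 0 < S :=
    calc (0 : ℝ) < ((1 : ℕ) * (Nat.totient 1 : ℕ) : ℝ)⁻¹ := by simp
      _ ≤ S := summable_inv_mul_totient.le_tsum 1 fun n _ => by positivity
  have h_log_three : 1 < log 3 :=
    (lt_log_iff_exp_lt (by norm_num)).mpr (by linarith [exp_one_lt_d9])
  have hL : 0 < log (log 3) := log_pos h_log_three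
  refine ⟨4 * (√2 * S) / √(log (log 3)), by positivity, fun N hN => ?_⟩
  have h_loglog : √N * √(log (log 3)) ≤ √(N * log (log N)) := by
    rw [← sqrt_mul (Nat.cast_nonneg N)]
    gcongr
    exact_mod_cast hN
  rw [show Icc 1 N = Ioc 0 N from Icc_add_one_left_eq_Ioc 0 N]
  calc _ ≤ 4 * (√2 * S) * √N :=
        sum_Ioc_le_mul_sqrt_of_dyadic (by positivity) sum_Ioc_half_one_div_sqrt_totient_le N
    _ = 4 * (√2 * S) / √(log (log 3)) * (√N * √(log (log 3))) := by
        field_simp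
    _ ≤ _ := by gcongr
end
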